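/- Let (E, F) be a Finsler algebroid, h₀ its Barthel endomorphism (the unique homogeneous, conservative, torsion-free horizontal endomorphism). Then (E, F) is a Berwald Lie algebroid if and only if there exists a linear connection ∇ on E such that (∇_X Y)^V = [X^{h₀}, Y^V]_L for all X, Y ∈ Γ(E). -/

import Mathlib

/-!
We work with a Lie algebroid `π : E → M` in a (global) trivialization:
the base `M` is modelled on a real normed space `A`, the fibre of `E` is a real
normed space `B`, the total space is `E = A × B`, sections of `E` are maps
`A → B`, the anchor is `ρ : A → (B →L[ℝ] A)` and the structure function of the
bracket is `Lb : A → (B →L[ℝ] B →L[ℝ] B)`.  The prolongation `L^π E → E` is the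
trivial bundle with fibre `B × B`; its sections are pairs of maps `(A × B) → B`
(the components along the canonical frames `𝒳_α` and `𝒱_α`).
-/

noncomputable section

variable {A B : Type*} [NormedAddCommGroup A] [NormedSpace ℝ A]
  [NormedAddCommGroup B] [NormedSpace ℝ B]

/-- Sections of the prolongation `L^π E → E`. -/
abbrev Sec (A B : Type*) := ((A × B) → B) × ((A × B) → B)

/-- The axioms of a Lie algebroid (smoothness, antisymmetry and the two
structure equations: anchor compatibility and the Jacobi identity). -/
def IsLieAlgebroidData (ρ : A → B →L[ℝ] A) (Lb : A → B →L[ℝ] B →L[ℝ] B) : Prop :=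
  ContDiff ℝ (⊤ : ℕ∞) ρ ∧ ContDiff ℝ (⊤ : ℕ∞) Lb ∧
    (∀ x u v, Lb x u v = - Lb x v u) ∧
    (∀ x u v, fderiv ℝ ρ x (ρ x u) v - fderiv ℝ ρ x (ρ x v) u = ρ x (Lb x u v)) ∧
    (∀ x u v w,
      fderiv ℝ Lb x (ρ x u) v w + Lb x u (Lb x v w) +
        fderiv ℝ Lb x (ρ x v) w u + Lb x v (Lb x w u) +
          fderiv ℝ Lb x (ρ x w) u v + Lb x w (Lb x u v) = 0)

/-- The Lie algebroid bracket `[X, Y]_E` of two sections of `E`. -/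
def abr (ρ : A → B →L[ℝ] A) (Lb : A → B →L[ℝ] B →L[ℝ] B) (X Y : A → B) : A → B :=
  fun x => fderiv ℝ Y x (ρ x (X x)) - fderiv ℝ X x (ρ x (Y x)) + Lb x (X x) (Y x)

/-- The action `ρ(X)(f)` of a section through the anchor. -/
def ρf (ρ : A → B →L[ℝ] A) (X : A → B) (f : A → ℝ) : A → ℝ :=
  fun x => fderiv ℝ f x (ρ x (X x))

/-- Vertical lift `f^∨ = f ∘ π` of a function on `M`. -/
def fvert (f : A → ℝ) : A × B → ℝ := fun p => f p.1

/-- Complete lift `f^c(u) = ρ(u)(f)` of a function on `M`. -/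
def fcomp (ρ : A → B →L[ℝ] A) (f : A → ℝ) : A × B → ℝ :=
  fun p => fderiv ℝ f p.1 (ρ p.1 p.2)

/-- The tangent vector to `E` determined by a prolongation section through the
prolongation anchor `ρ_L(u, z) = z`. -/
def ρL (ρ : A → B →L[ℝ] A) (U : Sec A B) (p : A × B) : A × B :=
  (ρ p.1 (U.1 p), U.2 p)

/-- The bracket `[·,·]_L` of the prolongation Lie algebroid `L^π E`. -/
def pbr (ρ : A → B →L[ℝ] A) (Lb : A → B →L[ℝ] B →L[ℝ] B) (U V : Sec A B) : Sec A B :=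
  (fun p => fderiv ℝ V.1 p (ρL ρ U p) - fderiv ℝ U.1 p (ρL ρ V p) + Lb p.1 (U.1 p) (V.1 p),
   fun p => fderiv ℝ V.2 p (ρL ρ U p) - fderiv ℝ U.2 p (ρL ρ V p))

/-- The vertical endomorphism `J = i ∘ j` of `L^π E`. -/
def vJ (U : Sec A B) : Sec A B := (0, U.1)

/-- The Liouville (Euler) section `C = i ∘ δ`. -/
def Liou : Sec A B := (0, fun p => p.2)

/-- Vertical lift `X^V` of a section of `E` to `L^π E`. -/
def vlift (X : A → B) : Sec A B := (0, fun p => X p.1)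

/-- Complete lift `X^C` of a section of `E` to `L^π E`. -/
def clift (ρ : A → B →L[ℝ] A) (Lb : A → B →L[ℝ] B →L[ℝ] B) (X : A → B) : Sec A B :=
  (fun p => X p.1, fun p => fderiv ℝ X p.1 (ρ p.1 p.2) - Lb p.1 (X p.1) p.2)

/-- The horizontal endomorphism with coefficient `𝓑`
(`h = (𝒳_β + 𝓑^α_β 𝒱_α) ⊗ 𝒳^β`). -/
def hor (𝓑 : A × B → B →L[ℝ] B) (U : Sec A B) : Sec A B :=
  (U.1, fun p => 𝓑 p (U.1 p))

/-- The vertical projector `v = Id − h` associated to a horizontal endomorphism. -/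
def vpr (𝓑 : A × B → B →L[ℝ] B) (U : Sec A B) : Sec A B := U - hor 𝓑 U

/-- Horizontal lift `X^h = h(X^C)`. -/
def hlift (ρ : A → B →L[ℝ] A) (Lb : A → B →L[ℝ] B →L[ℝ] B)
    (𝓑 : A × B → B →L[ℝ] B) (X : A → B) : Sec A B :=
  hor 𝓑 (clift ρ Lb X)

/-- Multiplication of a prolongation section by a function on `E`. -/
def fsmul (g : A × B → ℝ) (U : Sec A B) : Sec A B :=
  (fun p => g p • U.1 p, fun p => g p • U.2 p)

/-- Generalized Frölicher–Nijenhuis bracket `[K, Z]^{F-N}` of a `(1,1)`-tensor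
with a section: `[K, Z]^{F-N}(U) = [K(U), Z]_L − K([U, Z]_L)`. -/
def fnKZ (ρ : A → B →L[ℝ] A) (Lb : A → B →L[ℝ] B →L[ℝ] B)
    (K : Sec A B → Sec A B) (Z U : Sec A B) : Sec A B :=
  pbr ρ Lb (K U) Z - K (pbr ρ Lb U Z)

/-- Generalized Frölicher–Nijenhuis bracket `[Z, K]^{F-N}` of a section with a
`(1,1)`-tensor. -/
def fnZK (ρ : A → B →L[ℝ] A) (Lb : A → B →L[ℝ] B →L[ℝ] B)
    (Z : Sec A B) (K : Sec A B → Sec A B) (U : Sec A B) : Sec A B :=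
  pbr ρ Lb Z (K U) - K (pbr ρ Lb Z U)

/-- Generalized Frölicher–Nijenhuis bracket of two `(1,1)`-tensors, evaluated on
two sections. -/
def fnKL (ρ : A → B →L[ℝ] A) (Lb : A → B →L[ℝ] B →L[ℝ] B)
    (K L' : Sec A B → Sec A B) (U V : Sec A B) : Sec A B :=
  pbr ρ Lb (K U) (L' V) + pbr ρ Lb (L' U) (K V)
    + K (L' (pbr ρ Lb U V)) + L' (K (pbr ρ Lb U V))
    - K (pbr ρ Lb U (L' V)) - K (pbr ρ Lb (L' U) V)
    - L' (pbr ρ Lb U (K V)) - L' (pbr ρ Lb (K U) V)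

/-- The slit total space `E ∖ {0}` (complement of the zero section). -/
def Slit : Set (A × B) := {p | p.2 ≠ 0}

/-- Smoothness of a prolongation section (on all of `E`). -/
def SecSmooth (U : Sec A B) : Prop :=
  ContDiff ℝ (⊤ : ℕ∞) U.1 ∧ ContDiff ℝ (⊤ : ℕ∞) U.2

/-- Smoothness of a prolongation section away from the zero section. -/
def SecSmoothOn (U : Sec A B) : Prop :=
  ContDiffOn ℝ (⊤ : ℕ∞) U.1 (Slit (A := A) (B := B)) ∧
    ContDiffOn ℝ (⊤ : ℕ∞) U.2 (Slit (A := A) (B := B))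

/-- Equality of prolongation sections away from the zero section. -/
def OnSlit (U V : Sec A B) : Prop :=
  ∀ p : A × B, p.2 ≠ 0 → U.1 p = V.1 p ∧ U.2 p = V.2 p

/-- The semispray associated to the horizontal endomorphism `𝓑` (i.e. `h(S)` for
any semispray `S`). -/
def Sassoc (𝓑 : A × B → B →L[ℝ] B) : Sec A B :=
  (fun p => p.2, fun p => 𝓑 p p.2)

/-- The Nijenhuis tensor `N_h` of the horizontal endomorphism `𝓑`. -/
def NijH (ρ : A → B →L[ℝ] A) (Lb : A → B →L[ℝ] B →L[ℝ] B)
    (𝓑 : A × B → B →L[ℝ] B) (U V : Sec A B) : Sec A B :=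
  pbr ρ Lb (hor 𝓑 U) (hor 𝓑 V) - hor 𝓑 (pbr ρ Lb (hor 𝓑 U) V)
    - hor 𝓑 (pbr ρ Lb U (hor 𝓑 V)) + hor 𝓑 (pbr ρ Lb U V)

/-- The curvature `Ω = −N_h` of a horizontal endomorphism. -/
def CurvH (ρ : A → B →L[ℝ] A) (Lb : A → B →L[ℝ] B →L[ℝ] B)
    (𝓑 : A × B → B →L[ℝ] B) (U V : Sec A B) : Sec A B :=
  - NijH ρ Lb 𝓑 U V

/-- The strong torsion `T = i_S t + H` of a horizontal endomorphism, where
`t = [J, h]^{F-N}` is the weak torsion and `H = [h, C]^{F-N}` the tension. -/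
def StrongTor (ρ : A → B →L[ℝ] A) (Lb : A → B →L[ℝ] B →L[ℝ] B)
    (𝓑 : A × B → B →L[ℝ] B) (U : Sec A B) : Sec A B :=
  fnKL ρ Lb vJ (hor 𝓑) (Sassoc 𝓑) U + fnKZ ρ Lb (hor 𝓑) Liou U

/-- The almost complex structure `F = h ∘ [S, h]^{F-N} − J` induced by a
horizontal endomorphism with associated semispray `S`. -/
def bigF (ρ : A → B →L[ℝ] A) (Lb : A → B →L[ℝ] B →L[ℝ] B)
    (𝓑 : A × B → B →L[ℝ] B) (U : Sec A B) : Sec A B :=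
  hor 𝓑 (fnZK ρ Lb (Sassoc 𝓑) (hor 𝓑) U) - vJ U

/-- Homogeneity of a horizontal endomorphism: its tension `H = [h, C]^{F-N}`
vanishes. -/
def HomogeneousH (ρ : A → B →L[ℝ] A) (Lb : A → B →L[ℝ] B →L[ℝ] B)
    (𝓑 : A × B → B →L[ℝ] B) : Prop :=
  ∀ U : Sec A B, SecSmoothOn U → OnSlit (fnKZ ρ Lb (hor 𝓑) Liou U) 0

/-- Torsion-freeness of a horizontal endomorphism: its weak torsion
`t = [J, h]^{F-N}` vanishes. -/
def TorsionFreeH (ρ : A → B →L[ℝ] A) (Lb : A → B →L[ℝ] B →L[ℝ] B)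
    (𝓑 : A × B → B →L[ℝ] B) : Prop :=
  ∀ U V : Sec A B, SecSmoothOn U → SecSmoothOn V →
    OnSlit (fnKL ρ Lb vJ (hor 𝓑) U V) 0

/-- The one-form `d^L_J F = i_J d^L F` of a Finsler function. -/
def θF (Fl : A × B → ℝ) (U : Sec A B) : A × B → ℝ :=
  fun p => fderiv ℝ Fl p ((0 : A), U.1 p)

/-- The fundamental two-form `ω = d^L d^L_J F` of a Finsler function. -/
def ωF (ρ : A → B →L[ℝ] A) (Lb : A → B →L[ℝ] B →L[ℝ] B)
    (Fl : A × B → ℝ) (U V : Sec A B) : A × B → ℝ :=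
  fun p => fderiv ℝ (θF Fl V) p (ρL ρ U p) - fderiv ℝ (θF Fl U) p (ρL ρ V p)
    - θF Fl (pbr ρ Lb U V) p

/-- The axioms of a Finsler algebroid: the fundamental function is smooth away
from the zero section, positive there, homogeneous of degree `2`
(`ρ_L(C)(F) = 2F`), and its fundamental form `ω = d^L d^L_J F` is
nondegenerate. -/
def IsFinslerData (ρ : A → B →L[ℝ] A) (Lb : A → B →L[ℝ] B →L[ℝ] B)
    (Fl : A × B → ℝ) : Prop :=
  ContDiffOn ℝ (⊤ : ℕ∞) Fl (Slit (A := A) (B := B)) ∧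
    (∀ p : A × B, p.2 ≠ 0 → 0 < Fl p) ∧
    (∀ p : A × B, p.2 ≠ 0 → fderiv ℝ Fl p ((0 : A), p.2) = 2 * Fl p) ∧
    (∀ W : Sec A B, SecSmoothOn W →
      (∀ U : Sec A B, SecSmoothOn U → ∀ p : A × B, p.2 ≠ 0 → ωF ρ Lb Fl W U p = 0) →
      ∀ p : A × B, p.2 ≠ 0 → W.1 p = 0 ∧ W.2 p = 0)

/-- Conservativity of a horizontal endomorphism: `d^L_h F = 0`. -/
def Conservative (ρ : A → B →L[ℝ] A) (Fl : A × B → ℝ)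
    (𝓑 : A × B → B →L[ℝ] B) : Prop :=
  ∀ p : A × B, p.2 ≠ 0 → ∀ z : B, fderiv ℝ Fl p (ρ p.1 z, 𝓑 p z) = 0

/-- The vertical metric `G(J X̃, J Ỹ) = ω(J X̃, Ỹ)`, evaluated on two vertical
sections. -/
def Gmet (ρ : A → B →L[ℝ] A) (Lb : A → B →L[ℝ] B →L[ℝ] B)
    (Fl : A × B → ℝ) (W₁ W₂ : Sec A B) : A × B → ℝ :=
  ωF ρ Lb Fl ((0 : (A × B) → B), W₁.2) (W₂.2, (0 : (A × B) → B))

/-- The prolongation `G̃(X̃, Ỹ) = G(J X̃, J Ỹ) + G(v X̃, v Ỹ)` of the vertical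
metric along the horizontal endomorphism `𝓑`. -/
def Gtil (ρ : A → B →L[ℝ] A) (Lb : A → B →L[ℝ] B →L[ℝ] B)
    (Fl : A × B → ℝ) (𝓑 : A × B → B →L[ℝ] B) (U V : Sec A B) : A × B → ℝ :=
  fun p => Gmet ρ Lb Fl (vJ U) (vJ V) p + Gmet ρ Lb Fl (vpr 𝓑 U) (vpr 𝓑 V) p

/-- The linear connection on `E` with Christoffel coefficient `Γ`:
`∇_X Y = ρ(X)(Y) + Γ(X, Y)`. -/
def covD (ρ : A → B →L[ℝ] A) (Γ : A → B →L[ℝ] B →L[ℝ] B) (X Y : A → B) : A → B :=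
  fun x => fderiv ℝ Y x (ρ x (X x)) + Γ x (X x) (Y x)

/-- The coefficient of the horizontal endomorphism `h_∇` generated by the linear
connection `Γ` (`𝓑^β_α = −y^γ Γ^β_{αγ}`). -/
def horOf (Γ : A → B →L[ℝ] B →L[ℝ] B) : A × B → B →L[ℝ] B :=
  fun p => -((Γ p.1).flip p.2)

/-!
Testing homogeneity and torsion-freeness of a horizontal endomorphism with coefficient `𝓑` on
constant sections gives Euler's relation `∂_y 𝓑 u = 𝓑 u` and `∂_u 𝓑 v − ∂_v 𝓑 u = [u, v]` for
the vertical derivatives. Differentiating `d^L_h F = 0` vertically and using these relations,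
`ω((0, 𝓑(y) y), ·)` turns out not to depend on `𝓑`, so nondegeneracy of `ω` determines `𝓑(y) y`,
and one more vertical derivative determines `𝓑`: this is the uniqueness of the Barthel
endomorphism. Hence if `∇` is torsion-free and `h_∇` is conservative then `h_∇ = h₀`, and
`(∇_X Y)^V = [X^{h₀}, Y^V]_L` is a direct computation. Conversely, that identity on constant
sections reads `Γ(u, v) = −∂_v 𝓑₀ u`, so `∇` inherits torsion-freeness from `h₀`, and by Euler's
relation `h_∇ = h₀`, which is conservative.
-/

open Set Filter Topology

lemma slit_mem_nhds {A B : Type*} [TopologicalSpace A] [NormedAddCommGroup B] {p : A × B}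
    (hp : p.2 ≠ 0) : Slit ∈ 𝓝 p :=
  (isOpen_compl_singleton.preimage continuous_snd).mem_nhds hp

lemma differentiableAt_of_contDiffOn_slit {C : Type*} [NormedAddCommGroup C] [NormedSpace ℝ C]
    {f : A × B → C} (hf : ContDiffOn ℝ (⊤ : ℕ∞) f Slit) {p : A × B} (hp : p.2 ≠ 0) :
    DifferentiableAt ℝ f p :=
  (hf.contDiffAt (slit_mem_nhds hp)).differentiableAt (by simp)

lemma differentiableAt_fderiv_of_contDiffOn_slit {C : Type*} [NormedAddCommGroup C]
    [NormedSpace ℝ C] {f : A × B → C} (hf : ContDiffOn ℝ (⊤ : ℕ∞) f Slit) {p : A × B}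
    (hp : p.2 ≠ 0) : DifferentiableAt ℝ (fderiv ℝ f) p :=
  ((hf.contDiffAt (slit_mem_nhds hp)).fderiv_right (m := 1) (by norm_cast)).differentiableAt
    one_ne_zero

lemma fderiv_fun_snd_apply (p w : A × B) : fderiv ℝ (fun q : A × B => q.2) p w = w.2 := by
  rw [fderiv_snd]; rfl

lemma fderiv_comp_fst_apply {C : Type*} [NormedAddCommGroup C] [NormedSpace ℝ C] {X : A → C}
    {p : A × B} (hX : DifferentiableAt ℝ X p.1) (w : A × B) :
    fderiv ℝ (fun q => X q.1) p w = fderiv ℝ X p.1 w.1 := by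
  have h : HasFDerivAt (fun q : A × B => X q.1) ((fderiv ℝ X p.1).comp (.fst ℝ A B)) p :=
    hX.hasFDerivAt.comp p hasFDerivAt_fst
  rw [h.fderiv]
  rfl

/-- Vanishing of the tension `[h, C]^{F-N}` on the basic sections `(u, 0)`, in coordinates
(Euler's relation for `𝓑`). -/
def IsFibreHomogeneous (𝓑 : A × B → B →L[ℝ] B) : Prop :=
  ∀ p : A × B, p.2 ≠ 0 → ∀ u, fderiv ℝ (fun q => 𝓑 q u) p (0, p.2) = 𝓑 p u

/-- Vanishing of the weak torsion `[J, h]^{F-N}` on the basic sections `(u, 0)`, in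
coordinates. -/
def IsFibreTorsionFree (Lb : A → B →L[ℝ] B →L[ℝ] B) (𝓑 : A × B → B →L[ℝ] B) : Prop :=
  ∀ p : A × B, p.2 ≠ 0 → ∀ u v,
    fderiv ℝ (fun q => 𝓑 q v) p (0, u) - fderiv ℝ (fun q => 𝓑 q u) p (0, v) = Lb p.1 u v

variable {ρ : A → B →L[ℝ] A} {Lb : A → B →L[ℝ] B →L[ℝ] B} {Fl : A × B → ℝ}
  {𝓑 𝓑' : A × B → B →L[ℝ] B} {Γ : A → B →L[ℝ] B →L[ℝ] B}

lemma secSmoothOn_const (u : B) : SecSmoothOn ((fun _ => u, 0) : Sec A B) :=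
  ⟨contDiffOn_const, contDiffOn_const⟩

lemma HomogeneousH.isFibreHomogeneous (h : HomogeneousH ρ Lb 𝓑) : IsFibreHomogeneous 𝓑 := by
  intro p hp u
  have h := (h _ (secSmoothOn_const u) p hp).2
  simp only [fnKZ, pbr, hor, Liou, ρL, Prod.snd_sub, Prod.snd_zero, Pi.sub_apply,
    Pi.zero_apply, map_zero, fderiv_zero, fderiv_const_apply, zero_apply,
    fderiv_fun_snd_apply, add_zero, sub_zero, sub_eq_zero] at h
  exact h.symm

lemma TorsionFreeH.isFibreTorsionFree (h : TorsionFreeH ρ Lb 𝓑) : IsFibreTorsionFree Lb 𝓑 := by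
  intro p hp u v
  have h := (h _ _ (secSmoothOn_const u) (secSmoothOn_const v) p hp).2
  simp only [fnKL, pbr, hor, vJ, ρL, Prod.snd_sub, Prod.snd_add, Prod.snd_zero,
    Pi.sub_apply, Pi.add_apply, Pi.zero_apply, map_zero, fderiv_zero, fderiv_const_apply,
    zero_apply, sub_zero, zero_sub, add_zero, add_sub_cancel_right,
    ← sub_eq_add_neg, sub_eq_zero, zero_add] at h
  exact h

lemma IsFibreTorsionFree.fderiv_apply_snd (hs : IsFibreTorsionFree Lb 𝓑)
    (hh : IsFibreHomogeneous 𝓑) {p : A × B} (hp : p.2 ≠ 0) (hd : DifferentiableAt ℝ 𝓑 p)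
    (u : B) :
    fderiv ℝ (fun q => 𝓑 q q.2) p (0, u) = Lb p.1 u p.2 + (2 : ℝ) • 𝓑 p u := by
  have h := (hd.hasFDerivAt.clm_apply hasFDerivAt_snd).fderiv
  have hu : fderiv ℝ (fun q => 𝓑 q p.2) p (0, u) = fderiv ℝ 𝓑 p (0, u) p.2 := by
    rw [fderiv_clm_apply hd (differentiableAt_const _)]
    simp
  have hT := hs p hp u p.2
  rw [hh p hp u, sub_eq_iff_eq_add, hu] at hT
  rw [h]
  simp only [add_apply, ContinuousLinearMap.comp_apply, ContinuousLinearMap.coe_snd',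
    ContinuousLinearMap.flip_apply, hT, two_smul]
  abel

lemma fderiv_horOf_apply_vertical {p : A × B} {X : A → B} (hΓ : DifferentiableAt ℝ Γ p.1)
    (hX : DifferentiableAt ℝ X p.1) (b : B) :
    fderiv ℝ (fun q => horOf Γ q (X q.1)) p (0, b) = -Γ p.1 (X p.1) b := by
  have hΓX : HasFDerivAt (fun q : A × B => Γ q.1 (X q.1))
      ((fderiv ℝ (fun x => Γ x (X x)) p.1).comp (ContinuousLinearMap.fst ℝ A B)) p :=
    (hΓ.clm_apply hX).hasFDerivAt.comp p hasFDerivAt_fst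
  have h := (hΓX.clm_apply hasFDerivAt_snd).fun_neg
  simp only [horOf, neg_apply, ContinuousLinearMap.flip_apply]
  rw [h.fderiv]
  simp

lemma isFibreHomogeneous_horOf (hΓ : Differentiable ℝ Γ) : IsFibreHomogeneous (horOf Γ) :=
  fun p _ u => by
    rw [fderiv_horOf_apply_vertical (X := fun _ => u) (hΓ p.1) (differentiableAt_const u)]
    simp [horOf]

lemma isFibreTorsionFree_horOf (hΓ : Differentiable ℝ Γ)
    (hΓt : ∀ x u v, Γ x u v - Γ x v u = Lb x u v) : IsFibreTorsionFree Lb (horOf Γ) :=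
  fun p _ u v => by
    rw [fderiv_horOf_apply_vertical (X := fun _ => v) (hΓ p.1) (differentiableAt_const v),
      fderiv_horOf_apply_vertical (X := fun _ => u) (hΓ p.1) (differentiableAt_const u),
      neg_sub_neg]
    exact hΓt p.1 u v

lemma contDiff_horOf (hΓ : ContDiff ℝ (⊤ : ℕ∞) Γ) : ContDiff ℝ (⊤ : ℕ∞) (horOf Γ) := by
  have hflip : ContDiff ℝ (⊤ : ℕ∞) (ContinuousLinearMap.flip :
      (B →L[ℝ] B →L[ℝ] B) → (B →L[ℝ] B →L[ℝ] B)) :=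
    (ContinuousLinearMap.flipₗᵢ ℝ B B B).contDiff
  exact ((hflip.comp (hΓ.comp contDiff_fst)).clm_apply contDiff_snd).neg

lemma Conservative.fderiv_fderiv_vertical (hc : Conservative ρ Fl 𝓑)
    (hFs : ContDiffOn ℝ (⊤ : ℕ∞) Fl Slit) {p : A × B} (hp : p.2 ≠ 0) {z : B}
    (hz : DifferentiableAt ℝ (fun q => 𝓑 q z) p) (u : B) :
    fderiv ℝ (fderiv ℝ Fl) p (0, u) (ρ p.1 z, 𝓑 p z)
      = -fderiv ℝ Fl p (0, fderiv ℝ (fun q => 𝓑 q z) p (0, u)) := by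
  -- along the fibre through `p` the anchor term `ρ p.1 z` is constant
  let ι : B → A × B := fun y => (p.1, y)
  have hι : HasFDerivAt ι (ContinuousLinearMap.inr ℝ A B) p.2 :=
    hasFDerivAt_prodMk_right p.1 p.2
  have hF2 := (differentiableAt_fderiv_of_contDiffOn_slit hFs hp).hasFDerivAt.comp p.2 hι
  have hm := (hasFDerivAt_const (ρ p.1 z) p.2).prodMk (hz.hasFDerivAt.comp p.2 hι)
  have hφ := hF2.clm_apply hm
  have hφ0 : HasFDerivAt (fun y => fderiv ℝ Fl (ι y) (ρ p.1 z, 𝓑 (ι y) z))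
      (0 : B →L[ℝ] ℝ) p.2 := by
    refine (hasFDerivAt_const (0 : ℝ) p.2).congr_of_eventuallyEq ?_
    filter_upwards [isOpen_compl_singleton.mem_nhds hp] with y hy
    exact hc (p.1, y) hy z
  have h := congrArg (· u) (hφ.unique hφ0)
  simp only [add_apply, ContinuousLinearMap.coe_comp, Function.comp_apply,
    ContinuousLinearMap.prod_apply, ContinuousLinearMap.flip_apply, ContinuousLinearMap.inr_apply,
    zero_apply, ι] at h
  linear_combination h

/-- The right-hand side does not involve `𝓑`: this is what pins down the Barthel endomorphism. -/
lemma Conservative.fderiv_fderiv_vertical_semispray (hc : Conservative ρ Fl 𝓑)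
    (hs : IsFibreTorsionFree Lb 𝓑) (hh : IsFibreHomogeneous 𝓑)
    (hFs : ContDiffOn ℝ (⊤ : ℕ∞) Fl Slit) {p : A × B} (hp : p.2 ≠ 0)
    (hd : DifferentiableAt ℝ 𝓑 p) (u : B) :
    fderiv ℝ (fderiv ℝ Fl) p (0, u) (ρ p.1 p.2, 𝓑 p p.2)
      = fderiv ℝ Fl p (ρ p.1 u, 0) - fderiv ℝ Fl p (0, Lb p.1 u p.2) := by
  have hT : fderiv ℝ (fun q => 𝓑 q p.2) p (0, u) = Lb p.1 u p.2 + 𝓑 p u := by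
    rw [← sub_eq_iff_eq_add, ← hh p hp u]
    exact hs p hp u p.2
  have hcu : fderiv ℝ Fl p (ρ p.1 u, 0) + fderiv ℝ Fl p (0, 𝓑 p u) = 0 := by
    rw [← map_add, Prod.mk_add_mk, add_zero, zero_add]
    exact hc p hp u
  have hsplit : ((0 : A), Lb p.1 u p.2 + 𝓑 p u) = (0, Lb p.1 u p.2) + (0, 𝓑 p u) := by simp
  rw [hc.fderiv_fderiv_vertical hFs hp (hd.clm_apply (differentiableAt_const _)), hT, hsplit,
    map_add]
  linear_combination -hcu

lemma ωF_vertical_left (hFs : ContDiffOn ℝ (⊤ : ℕ∞) Fl Slit) {p : A × B} (hp : p.2 ≠ 0)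
    (w : A × B → B) {U : Sec A B} (hU : DifferentiableAt ℝ U.1 p) :
    ωF ρ Lb Fl (0, w) U p = fderiv ℝ (fderiv ℝ Fl) p (0, w p) (0, U.1 p) := by
  have hθ : HasFDerivAt (θF Fl U) _ p :=
    (differentiableAt_fderiv_of_contDiffOn_slit hFs hp).hasFDerivAt.clm_apply
      ((hasFDerivAt_const (0 : A) p).prodMk hU.hasFDerivAt)
  have hθ0 : θF Fl ((0 : A × B → B), w) = 0 := by
    funext q
    simp only [θF, Prod.mk_zero_zero, map_zero, Pi.zero_apply]
  simp [ωF, hθ.fderiv, hθ0, pbr, ρL, θF]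

/-- Two conservative coefficients differ on the semispray direction by a vertical section that
is `ω`-orthogonal to everything, hence vanishes by nondegeneracy of `ω`. -/
lemma IsFinslerData.apply_snd_eq_of_conservative (hF : IsFinslerData ρ Lb Fl)
    (h𝓑 : ContDiffOn ℝ (⊤ : ℕ∞) 𝓑 Slit) (hs : IsFibreTorsionFree Lb 𝓑)
    (hh : IsFibreHomogeneous 𝓑) (hc : Conservative ρ Fl 𝓑)
    (h𝓑' : ContDiffOn ℝ (⊤ : ℕ∞) 𝓑' Slit) (hs' : IsFibreTorsionFree Lb 𝓑')
    (hh' : IsFibreHomogeneous 𝓑') (hc' : Conservative ρ Fl 𝓑') {p : A × B} (hp : p.2 ≠ 0) :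
    𝓑 p p.2 = 𝓑' p p.2 := by
  obtain ⟨hFs, -, -, hnd⟩ := hF
  let w : A × B → B := fun q => 𝓑 q q.2 - 𝓑' q q.2
  have hw : ContDiffOn ℝ (⊤ : ℕ∞) w Slit :=
    (h𝓑.clm_apply contDiffOn_snd).sub (h𝓑'.clm_apply contDiffOn_snd)
  refine sub_eq_zero.mp (hnd (0, w) ⟨contDiffOn_const, hw⟩ ?_ p hp).2
  intro U hU q hq
  have hsymm := (hFs.contDiffAt (slit_mem_nhds hq)).isSymmSndFDerivAt
    (by rw [minSmoothness_of_isRCLikeNormedField]; norm_cast)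
  have hsplit : ((0 : A), w q) = (ρ q.1 q.2, 𝓑 q q.2) - (ρ q.1 q.2, 𝓑' q q.2) := by simp [w]
  rw [ωF_vertical_left hFs hq w (differentiableAt_of_contDiffOn_slit hU.1 hq), hsymm, hsplit,
    map_sub, hc.fderiv_fderiv_vertical_semispray hs hh hFs hq
      (differentiableAt_of_contDiffOn_slit h𝓑 hq),
    hc'.fderiv_fderiv_vertical_semispray hs' hh' hFs hq
      (differentiableAt_of_contDiffOn_slit h𝓑' hq), sub_self]

theorem IsFinslerData.eqOn_of_conservative (hF : IsFinslerData ρ Lb Fl)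
    (h𝓑 : ContDiffOn ℝ (⊤ : ℕ∞) 𝓑 Slit) (hs : IsFibreTorsionFree Lb 𝓑)
    (hh : IsFibreHomogeneous 𝓑) (hc : Conservative ρ Fl 𝓑)
    (h𝓑' : ContDiffOn ℝ (⊤ : ℕ∞) 𝓑' Slit) (hs' : IsFibreTorsionFree Lb 𝓑')
    (hh' : IsFibreHomogeneous 𝓑') (hc' : Conservative ρ Fl 𝓑') : EqOn 𝓑 𝓑' Slit := by
  intro p hp
  ext u
  have hdiag : (fun q : A × B => 𝓑 q q.2) =ᶠ[𝓝 p] fun q => 𝓑' q q.2 := by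
    filter_upwards [slit_mem_nhds hp] with q hq
    exact hF.apply_snd_eq_of_conservative h𝓑 hs hh hc h𝓑' hs' hh' hc' hq
  have h := DFunLike.congr_fun (hdiag.fderiv_eq (𝕜 := ℝ)) ((0 : A), u)
  simp only [hs.fderiv_apply_snd hh hp (differentiableAt_of_contDiffOn_slit h𝓑 hp),
    hs'.fderiv_apply_snd hh' hp (differentiableAt_of_contDiffOn_slit h𝓑' hp)] at h
  exact smul_right_injective B two_ne_zero (add_left_cancel h)

/-- `𝓑` is the horizontal endomorphism `h_∇` of the connection `∇` with coefficients `Γ`. -/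
def IsGeneratedBy (ρ : A → B →L[ℝ] A) (Lb : A → B →L[ℝ] B →L[ℝ] B)
    (𝓑 : A × B → B →L[ℝ] B) (Γ : A → B →L[ℝ] B →L[ℝ] B) : Prop :=
  ∀ X Y : A → B, ContDiff ℝ (⊤ : ℕ∞) X → ContDiff ℝ (⊤ : ℕ∞) Y →
    OnSlit (vlift (covD ρ Γ X Y)) (pbr ρ Lb (hlift ρ Lb 𝓑 X) (vlift Y))

lemma isGeneratedBy_of_eqOn (hΓ : Differentiable ℝ Γ) (h : EqOn 𝓑 (horOf Γ) Slit) :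
    IsGeneratedBy ρ Lb 𝓑 Γ := by
  intro X Y hX hY p hp
  have hXd : DifferentiableAt ℝ X p.1 := hX.differentiable (by simp) p.1
  have hYd : DifferentiableAt ℝ Y p.1 := hY.differentiable (by simp) p.1
  have hvert : fderiv ℝ (fun q => 𝓑 q (X q.1)) p (0, Y p.1) = -Γ p.1 (X p.1) (Y p.1) := by
    have hev : (fun q => 𝓑 q (X q.1)) =ᶠ[𝓝 p] fun q => horOf Γ q (X q.1) := by
      filter_upwards [slit_mem_nhds hp] with q hq
      rw [h hq]
    rw [hev.fderiv_eq, fderiv_horOf_apply_vertical (hΓ p.1) hXd]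
  simp [vlift, covD, hlift, hor, clift, pbr, ρL, fderiv_comp_fst_apply hXd,
    fderiv_comp_fst_apply hYd, hvert]

lemma IsGeneratedBy.apply_eq_neg_fderiv (hgen : IsGeneratedBy ρ Lb 𝓑 Γ) {p : A × B}
    (hp : p.2 ≠ 0) (u v : B) : Γ p.1 u v = -fderiv ℝ (fun q => 𝓑 q u) p (0, v) := by
  have h := (hgen (fun _ => u) (fun _ => v) contDiff_const contDiff_const p hp).2
  simpa [vlift, covD, hlift, hor, clift, pbr, ρL] using h

lemma IsGeneratedBy.sub_swap (hgen : IsGeneratedBy ρ Lb 𝓑 Γ) (hs : IsFibreTorsionFree Lb 𝓑)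
    (x : A) (u v : B) : Γ x u v - Γ x v u = Lb x u v := by
  cases subsingleton_or_nontrivial B with
  | inl _ => exact Subsingleton.elim _ _
  | inr _ =>
    obtain ⟨y, hy⟩ := exists_ne (0 : B)
    rw [hgen.apply_eq_neg_fderiv (p := (x, y)) hy, hgen.apply_eq_neg_fderiv (p := (x, y)) hy,
      neg_sub_neg]
    exact hs (x, y) hy u v

lemma IsGeneratedBy.eqOn_horOf (hgen : IsGeneratedBy ρ Lb 𝓑 Γ) (hh : IsFibreHomogeneous 𝓑) :
    EqOn (horOf Γ) 𝓑 Slit := by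
  intro p hp
  ext z
  simp [horOf, hgen.apply_eq_neg_fderiv hp, hh p hp]

lemma Conservative.congr (hc : Conservative ρ Fl 𝓑) (h : EqOn 𝓑 𝓑' Slit) :
    Conservative ρ Fl 𝓑' := fun p hp z => by
  rw [← h hp]
  exact hc p hp z

theorem berwald_iff_barthel_connection_general
    (ρ : A → B →L[ℝ] A) (Lb : A → B →L[ℝ] B →L[ℝ] B)
    (Fl : A × B → ℝ) (hF : IsFinslerData ρ Lb Fl)
    -- the Barthel endomorphism of `(E, F)`:
    (𝓑₀ : A × B → B →L[ℝ] B)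
    (h₀s : ContDiffOn ℝ (⊤ : ℕ∞) 𝓑₀ (Slit (A := A) (B := B)))
    (h₀hom : HomogeneousH ρ Lb 𝓑₀)
    (h₀cons : Conservative ρ Fl 𝓑₀)
    (h₀tf : TorsionFreeH ρ Lb 𝓑₀) :
    (∃ Γ : A → B →L[ℝ] B →L[ℝ] B, ContDiff ℝ (⊤ : ℕ∞) Γ ∧
      (∀ x u v, Γ x u v - Γ x v u = Lb x u v) ∧
      Conservative ρ Fl (horOf Γ)) ↔
    (∃ Γ : A → B →L[ℝ] B →L[ℝ] B, ContDiff ℝ (⊤ : ℕ∞) Γ ∧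
      ∀ X Y : A → B, ContDiff ℝ (⊤ : ℕ∞) X → ContDiff ℝ (⊤ : ℕ∞) Y →
        OnSlit (vlift (covD ρ Γ X Y)) (pbr ρ Lb (hlift ρ Lb 𝓑₀ X) (vlift Y))) := by
  have hs₀ := h₀tf.isFibreTorsionFree
  have hh₀ := h₀hom.isFibreHomogeneous
  constructor
  · rintro ⟨Γ, hΓ, hΓt, hΓc⟩
    have hΓd : Differentiable ℝ Γ := hΓ.differentiable (by simp)
    have hunique : EqOn 𝓑₀ (horOf Γ) Slit :=
      hF.eqOn_of_conservative h₀s hs₀ hh₀ h₀cons (contDiff_horOf hΓ).contDiffOn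
        (isFibreTorsionFree_horOf hΓd hΓt) (isFibreHomogeneous_horOf hΓd) hΓc
    exact ⟨Γ, hΓ, isGeneratedBy_of_eqOn hΓd hunique⟩
  · rintro ⟨Γ, hΓ, hgen : IsGeneratedBy ρ Lb 𝓑₀ Γ⟩
    exact ⟨Γ, hΓ, hgen.sub_swap hs₀, h₀cons.congr (hgen.eqOn_horOf hh₀).symm⟩

/-- A Finsler algebroid `(E, F)` is a Berwald Lie algebroid
(i.e. there is a torsion-free linear connection `∇` on `E` whose generated
horizontal endomorphism `h_∇` is conservative) if and only if there is a linear
connection `∇` on `E` with `(∇_X Y)^V = [X^{h₀}, Y^V]_L` for all sections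
`X, Y`, where `h₀` is the Barthel endomorphism (the unique homogeneous,
conservative, torsion-free horizontal endomorphism). -/
theorem berwald_iff_barthel_connection
    (ρ : A → B →L[ℝ] A) (Lb : A → B →L[ℝ] B →L[ℝ] B)
    (halg : IsLieAlgebroidData ρ Lb)
    (Fl : A × B → ℝ) (hF : IsFinslerData ρ Lb Fl)
    -- the Barthel endomorphism of `(E, F)`:
    (𝓑₀ : A × B → B →L[ℝ] B)
    (h₀s : ContDiffOn ℝ (⊤ : ℕ∞) 𝓑₀ (Slit (A := A) (B := B)))
    (h₀hom : HomogeneousH ρ Lb 𝓑₀)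
    (h₀cons : Conservative ρ Fl 𝓑₀)
    (h₀tf : TorsionFreeH ρ Lb 𝓑₀) :
    (∃ Γ : A → B →L[ℝ] B →L[ℝ] B, ContDiff ℝ (⊤ : ℕ∞) Γ ∧
      (∀ x u v, Γ x u v - Γ x v u = Lb x u v) ∧
      Conservative ρ Fl (horOf Γ)) ↔
    (∃ Γ : A → B →L[ℝ] B →L[ℝ] B, ContDiff ℝ (⊤ : ℕ∞) Γ ∧
      ∀ X Y : A → B, ContDiff ℝ (⊤ : ℕ∞) X → ContDiff ℝ (⊤ : ℕ∞) Y →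
        OnSlit (vlift (covD ρ Γ X Y)) (pbr ρ Lb (hlift ρ Lb 𝓑₀ X) (vlift Y))) :=
  berwald_iff_barthel_connection_general ρ Lb Fl hF 𝓑₀ h₀s h₀hom h₀cons h₀tf
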